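/- arXiv:1705.02623 — 3 statements merged into one kernel-verified Lean document; each statement's English description precedes it below -/
import Mathlib

section
/- Let G be a group and E a Banach G-bimodule whose left G-action is unital (the identity of G acts as the identity operator). Let D : G → E* be a bounded derivation, and let F_D ⊆ ℓ^∞(G) be the linear span of the constant function 1 together with the functions φ_{x,D}(g) = ⟨x, Dg·g⁻¹⟩ for x ∈ E. If there exists a bounded linear functional m on F_D that is invariant under all left translations by elements of G and satisfies m(1) = 1, then D is inner: there exists x₀* ∈ E* with Dg = x₀*·g − g·x₀* for all g ∈ G. -/
open BoundedContinuousFunction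

/-- A Banach `G`-bimodule: left and right actions of the group `G` on a Banach space `E`
by bounded linear operators, commuting with each other, with a uniform bound. -/
structure GroupBimodule (G E : Type*) [Group G] [NormedAddCommGroup E]
    [NormedSpace ℂ E] where
  l : G → E →L[ℂ] E
  r : G → E →L[ℂ] E
  l_mul : ∀ g h : G, l (g * h) = (l g).comp (l h)
  r_mul : ∀ g h : G, r (g * h) = (r h).comp (r g)
  lr_comm : ∀ g h : G, ∀ x : E, l g (r h x) = r h (l g x)
  bound : ∃ K : ℝ, 0 ≤ K ∧ ∀ g : G, ‖l g‖ ≤ K ∧ ‖r g‖ ≤ K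

/-- The span of the constant function `1` and the functions `φ_{x,D}(g) = ⟨x, Dg·g⁻¹⟩`,
inside the space of all functions `G → ℂ`. -/
noncomputable def phiSpan {G E : Type*} [Group G] [NormedAddCommGroup E] [NormedSpace ℂ E]
    (M : GroupBimodule G E) (D : G → (E →L[ℂ] ℂ)) : Submodule ℂ (G → ℂ) :=
  Submodule.span ℂ
    (insert (fun _ => (1 : ℂ)) {f : G → ℂ | ∃ y : E, f = fun g => D g (M.l g⁻¹ y)})

/-- Coercion of bounded (continuous) functions to plain functions, as a linear map. -/
noncomputable def bcfCoeLM (G : Type*) [TopologicalSpace G] : (G →ᵇ ℂ) →ₗ[ℂ] (G → ℂ) where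
  toFun f := ⇑f
  map_add' f g := by ext x; simp
  map_smul' c f := by ext x; simp

/-- `F_D` : the subspace of `ℓ^∞(G)` spanned by the constant `1` and the functions
`φ_{x,D}`, realised inside the bounded functions on the discrete group `G`. -/
noncomputable def FD {G E : Type*} [Group G] [TopologicalSpace G] [DiscreteTopology G]
    [NormedAddCommGroup E] [NormedSpace ℂ E]
    (M : GroupBimodule G E) (D : G → (E →L[ℂ] ℂ)) : Submodule ℂ (G →ᵇ ℂ) :=
  (phiSpan M D).comap (bcfCoeLM G)

/-- if there is a bounded linear functional `m` on `F_D` that is left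
translation invariant and satisfies `m(1) = 1`, then the bounded derivation `D` is inner. -/
theorem stmt2 {G E : Type*} [Group G] [TopologicalSpace G] [DiscreteTopology G]
    [NormedAddCommGroup E] [NormedSpace ℂ E] [CompleteSpace E]
    (M : GroupBimodule G E)
    (hunital : M.l 1 = ContinuousLinearMap.id ℂ E)
    (D : G → (E →L[ℂ] ℂ))
    (hD : ∀ g h : G, ∀ x : E, D (g * h) x = D g (M.l h x) + D h (M.r g x))
    (hDbdd : ∃ C : ℝ, ∀ g : G, ‖D g‖ ≤ C)
    (m : ↥(FD M D) →L[ℂ] ℂ)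
    (hm1 : ∀ f : ↥(FD M D), (∀ g : G, (↑f : G →ᵇ ℂ) g = 1) → m f = 1)
    (hminv : ∀ (g₀ : G) (f f' : ↥(FD M D)),
      (∀ g : G, (↑f' : G →ᵇ ℂ) g = (↑f : G →ᵇ ℂ) (g₀ * g)) → m f' = m f) :
    ∃ ξ : E →L[ℂ] ℂ, ∀ (g : G) (x : E), D g x = ξ (M.l g x) - ξ (M.r g x) := by
  obtain ⟨K, hK0, hK⟩ := M.bound
  obtain ⟨C, hC⟩ := hDbdd
  have hC0 : 0 ≤ C := (norm_nonneg (D 1)).trans (hC 1)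
  have hlinv : ∀ (g : G) (x : E), M.l g⁻¹ (M.l g x) = x := by
    intro g x
    have h := congrArg (fun T : E →L[ℂ] E => T x) (M.l_mul g⁻¹ g)
    simp only [inv_mul_cancel, hunital, ContinuousLinearMap.coe_id', id_eq,
      ContinuousLinearMap.comp_apply] at h
    exact h.symm
  have hlinv2 : ∀ (g : G) (x : E), M.l g (M.l g⁻¹ x) = x := by
    intro g x
    have := hlinv g⁻¹ x
    rwa [inv_inv] at this
  have hΦbound : ∀ (x : E) (g : G), ‖D g (M.l g⁻¹ x)‖ ≤ C * K * ‖x‖ := by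
    intro x g
    calc ‖D g (M.l g⁻¹ x)‖ ≤ ‖D g‖ * ‖M.l g⁻¹ x‖ := (D g).le_opNorm _
      _ ≤ C * (K * ‖x‖) := by
          apply mul_le_mul (hC g) ?_ (norm_nonneg _) hC0
          exact le_trans ((M.l g⁻¹).le_opNorm x)
            (mul_le_mul_of_nonneg_right (hK g⁻¹).1 (norm_nonneg x))
      _ = C * K * ‖x‖ := by ring
  let Φ : E → (G →ᵇ ℂ) := fun x =>
    BoundedContinuousFunction.ofNormedAddCommGroup (fun g => D g (M.l g⁻¹ x))
      continuous_of_discreteTopology (C * K * ‖x‖) (hΦbound x)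
  have hΦapp : ∀ (x : E) (g : G), Φ x g = D g (M.l g⁻¹ x) := fun x g => rfl
  have hΦmem : ∀ x : E, Φ x ∈ FD M D := by
    intro x
    exact Submodule.subset_span (Set.mem_insert_of_mem _ ⟨x, rfl⟩)
  have honemem : (1 : G →ᵇ ℂ) ∈ FD M D := by
    exact Submodule.subset_span (Set.mem_insert _ _)
  let Φₗ : E →ₗ[ℂ] (FD M D) :=
    { toFun := fun x => ⟨Φ x, hΦmem x⟩
      map_add' := fun x y => by
        apply Subtype.ext
        ext g
        simp [hΦapp]
      map_smul' := fun c x => by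
        apply Subtype.ext
        ext g
        simp [hΦapp] }
  have hΦnorm : ∀ x : E, ‖Φₗ x‖ ≤ C * K * ‖x‖ := by
    intro x
    show ‖Φ x‖ ≤ C * K * ‖x‖
    refine (BoundedContinuousFunction.norm_le ?_).2 (hΦbound x)
    positivity
  let ξ₀ : E →L[ℂ] (FD M D) := Φₗ.mkContinuous (C * K) hΦnorm
  refine ⟨m.comp ξ₀, ?_⟩
  intro g₀ x
  set oneF : ↥(FD M D) := ⟨1, honemem⟩ with honeF
  have hmone : m oneF = 1 := hm1 oneF (fun g => rfl)
  set f : ↥(FD M D) := Φₗ (M.l g₀ x) with hf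
  set f' : ↥(FD M D) := (D g₀ x) • oneF + Φₗ (M.r g₀ x) with hf'
  have key : m f' = m f := by
    apply hminv g₀
    intro g
    have h1 : M.l (g₀ * g)⁻¹ (M.l g₀ x) = M.l g⁻¹ x := by
      rw [mul_inv_rev, M.l_mul, ContinuousLinearMap.comp_apply, hlinv]
    show (D g₀ x) • (1 : G →ᵇ ℂ) g + Φ (M.r g₀ x) g = Φ (M.l g₀ x) (g₀ * g)
    rw [hΦapp, hΦapp, h1, hD g₀ g (M.l g⁻¹ x), hlinv2, M.lr_comm]
    simp
  have hmf' : m f' = D g₀ x + m (Φₗ (M.r g₀ x)) := by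
    rw [hf', map_add, map_smul, hmone]
    simp
  rw [hmf'] at key
  have : (m.comp ξ₀) (M.l g₀ x) = m f := rfl
  have h2 : (m.comp ξ₀) (M.r g₀ x) = m (Φₗ (M.r g₀ x)) := rfl
  rw [this, h2, ← key]
  ring
end

section
/- Let G be a group generated by a subgroup H and a normal subgroup N. Let F_N ⊆ ℓ^∞(N) be a left N-invariant subspace containing the constants, and F_G ⊆ ℓ^∞(G) a left G-invariant subspace containing the constants such that the restriction f↾_N lies in F_N for every f ∈ F_G. Suppose there exists a left H-invariant bounded functional m_H on ℓ^∞(H) with m_H(1) = 1, and a left N-invariant bounded functional m_N on F_N with m_N(1) = 1. Then there exists a left G-invariant bounded functional m_G on F_G with m_G(1) = 1. -/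
/-!
Average first over cosets of `N`, then over `H`: for `f ∈ F_G` put
`Φ f (h) = m_N (n ↦ f (h n))` and `m_G = m_H ∘ Φ`. Writing `g₀ = h₀ n₀` with `h₀ ∈ H`, `n₀ ∈ N`
(possible since `N` is normal and `H ⊔ N = G`), we have `h₀ n₀ h n = h₀ h (h⁻¹ n₀ h) n`, so
`N`-invariance of `m_N` turns `Φ (L_{g₀} f)` into `L_{h₀} (Φ f)`, and `H`-invariance of `m_H`
finishes.
-/

open BoundedContinuousFunction

section

variable {G 𝕜 : Type*} [Group G] [TopologicalSpace G] [ContinuousMul G]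
  [NontriviallyNormedField 𝕜]

variable (𝕜) in
noncomputable def restrictTranslate (N : Subgroup G) (g : G) : (G →ᵇ 𝕜) →L[𝕜] (N →ᵇ 𝕜) :=
  compContinuousCLM 𝕜 𝕜 ((ContinuousMap.mulLeft g).restrict (N : Set G))

theorem norm_restrictTranslate_apply_le (N : Subgroup G) (g : G) (f : G →ᵇ 𝕜) :
    ‖restrictTranslate 𝕜 N g f‖ ≤ ‖f‖ :=
  norm_compContinuous_le _ _

variable {N : Subgroup G} {FN : Submodule 𝕜 (N →ᵇ 𝕜)} {FG : Submodule 𝕜 (G →ᵇ 𝕜)}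
  (hmem : ∀ f ∈ FG, ∀ g : G, restrictTranslate 𝕜 N g f ∈ FN)

noncomputable def restrictTranslateOn (g : G) : FG →L[𝕜] FN :=
  ((restrictTranslate 𝕜 N g).comp FG.subtypeL).codRestrict FN fun f => hmem f f.2 g

@[simp]
theorem restrictTranslateOn_apply (g : G) (f : FG) (n : N) :
    (restrictTranslateOn hmem g f : N →ᵇ 𝕜) n = (f : G →ᵇ 𝕜) (g * n) :=
  rfl

theorem norm_map_restrictTranslateOn_le (mN : FN →L[𝕜] 𝕜) (g : G) (f : FG) :
    ‖mN (restrictTranslateOn hmem g f)‖ ≤ ‖mN‖ * ‖f‖ :=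
  mN.le_opNorm_of_le (norm_restrictTranslate_apply_le N g (f : G →ᵇ 𝕜))

noncomputable def leftCosetMean (mN : FN →L[𝕜] 𝕜) (H : Subgroup G) [DiscreteTopology H] :
    FG →L[𝕜] (H →ᵇ 𝕜) :=
  LinearMap.mkContinuous
    { toFun f := ofNormedAddCommGroupDiscrete (fun h : H => mN (restrictTranslateOn hmem h f)) _
        fun h => norm_map_restrictTranslateOn_le hmem mN h f
      map_add' f f' := by ext; simp
      map_smul' c f := by ext; simp }
    ‖mN‖ fun f =>
      norm_ofNormedAddCommGroup_le (f := fun h : H => mN (restrictTranslateOn hmem h f)) _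
        (by positivity) fun h => norm_map_restrictTranslateOn_le hmem mN h f

variable {hmem} {mN : FN →L[𝕜] 𝕜} {H : Subgroup G} [DiscreteTopology H]

@[simp]
theorem leftCosetMean_apply (f : FG) (h : H) :
    leftCosetMean hmem mN H f h = mN (restrictTranslateOn hmem h f) :=
  rfl

theorem leftCosetMean_eq_one (hmN1 : ∀ f : FN, (∀ n : N, (f : N →ᵇ 𝕜) n = 1) → mN f = 1)
    {f : FG} (hf : ∀ g : G, (f : G →ᵇ 𝕜) g = 1) : leftCosetMean hmem mN H f = 1 := by
  ext h
  simpa using hmN1 _ fun n => hf _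

theorem leftCosetMean_apply_of_translate (hN : N.Normal)
    (hmNinv : ∀ (n₀ : N) (f f' : FN),
      (∀ n : N, (f' : N →ᵇ 𝕜) n = (f : N →ᵇ 𝕜) (n₀ * n)) → mN f' = mN f)
    {h₀ n₀ : G} (hh₀ : h₀ ∈ H) (hn₀ : n₀ ∈ N) {f f' : FG}
    (hf' : ∀ g : G, (f' : G →ᵇ 𝕜) g = (f : G →ᵇ 𝕜) (h₀ * n₀ * g)) (h : H) :
    leftCosetMean hmem mN H f' h = leftCosetMean hmem mN H f (⟨h₀, hh₀⟩ * h) := by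
  have hconj : (h : G)⁻¹ * n₀ * h ∈ N := by simpa using hN.conj_mem n₀ hn₀ (h : G)⁻¹
  refine hmNinv ⟨_, hconj⟩ _ _ fun n => ?_
  simp only [restrictTranslateOn_apply, hf', Subgroup.coe_mul]
  group

end

theorem stmt3_general {G : Type*} [Group G] [TopologicalSpace G] [DiscreteTopology G]
    (H N : Subgroup G) (hNnormal : N.Normal) (hgen : H ⊔ N = ⊤)
    (FN : Submodule ℂ (↥N →ᵇ ℂ)) (FG : Submodule ℂ (G →ᵇ ℂ))
    (hFGinv : ∀ f ∈ FG, ∀ g₀ : G, ∀ f' : G →ᵇ ℂ,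
      (∀ g : G, f' g = f (g₀ * g)) → f' ∈ FG)
    (hrestr : ∀ f ∈ FG, ∀ fN : ↥N →ᵇ ℂ, (∀ n : N, fN n = f ↑n) → fN ∈ FN)
    (mH : (↥H →ᵇ ℂ) →L[ℂ] ℂ)
    (hmH1 : mH 1 = 1)
    (hmHinv : ∀ (h₀ : H) (f f' : ↥H →ᵇ ℂ),
      (∀ h : H, f' h = f (h₀ * h)) → mH f' = mH f)
    (mN : ↥FN →L[ℂ] ℂ)
    (hmN1 : ∀ f : ↥FN, (∀ n : N, (↑f : ↥N →ᵇ ℂ) n = 1) → mN f = 1)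
    (hmNinv : ∀ (n₀ : N) (f f' : ↥FN),
      (∀ n : N, (↑f' : ↥N →ᵇ ℂ) n = (↑f : ↥N →ᵇ ℂ) (n₀ * n)) → mN f' = mN f) :
    ∃ mG : ↥FG →L[ℂ] ℂ,
      (∀ f : ↥FG, (∀ g : G, (↑f : G →ᵇ ℂ) g = 1) → mG f = 1) ∧
      (∀ (g₀ : G) (f f' : ↥FG),
        (∀ g : G, (↑f' : G →ᵇ ℂ) g = (↑f : G →ᵇ ℂ) (g₀ * g)) → mG f' = mG f) := by
  have hmem : ∀ f ∈ FG, ∀ g : G, restrictTranslate ℂ N g f ∈ FN := fun f hf g =>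
    hrestr _ (hFGinv f hf g (f.compContinuous (ContinuousMap.mulLeft g)) fun _ => rfl) _
      fun _ => rfl
  refine ⟨mH.comp (leftCosetMean hmem mN H), fun f hf => ?_, fun g₀ f f' hf' => ?_⟩
  · simp [leftCosetMean_eq_one hmN1 hf, hmH1]
  · obtain ⟨h₀, hh₀, n₀, hn₀, rfl⟩ :=
      Subgroup.mem_sup_of_normal_right.mp (hgen ▸ Subgroup.mem_top g₀)
    exact hmHinv ⟨h₀, hh₀⟩ _ _ (leftCosetMean_apply_of_translate hNnormal hmNinv hh₀ hn₀ hf')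

/-- if `G` is generated by a subgroup `H` and a normal subgroup `N`,
`F_N ⊆ ℓ^∞(N)` and `F_G ⊆ ℓ^∞(G)` are left invariant subspaces containing the constants
with restrictions to `N` of members of `F_G` lying in `F_N`, and there are left invariant
normalised bounded functionals `m_H` on `ℓ^∞(H)` and `m_N` on `F_N`, then there is a left
`G`-invariant bounded functional `m_G` on `F_G` with `m_G(1) = 1`. -/
theorem stmt3 {G : Type*} [Group G] [TopologicalSpace G] [DiscreteTopology G]
    (H N : Subgroup G) (hNnormal : N.Normal) (hgen : H ⊔ N = ⊤)
    (FN : Submodule ℂ (↥N →ᵇ ℂ)) (FG : Submodule ℂ (G →ᵇ ℂ))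
    (hFNconst : ∀ f : ↥N →ᵇ ℂ, (∃ c : ℂ, ∀ n : N, f n = c) → f ∈ FN)
    (hFNinv : ∀ f ∈ FN, ∀ n₀ : N, ∀ f' : ↥N →ᵇ ℂ,
      (∀ n : N, f' n = f (n₀ * n)) → f' ∈ FN)
    (hFGconst : ∀ f : G →ᵇ ℂ, (∃ c : ℂ, ∀ g : G, f g = c) → f ∈ FG)
    (hFGinv : ∀ f ∈ FG, ∀ g₀ : G, ∀ f' : G →ᵇ ℂ,
      (∀ g : G, f' g = f (g₀ * g)) → f' ∈ FG)
    (hrestr : ∀ f ∈ FG, ∀ fN : ↥N →ᵇ ℂ, (∀ n : N, fN n = f ↑n) → fN ∈ FN)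
    (mH : (↥H →ᵇ ℂ) →L[ℂ] ℂ)
    (hmH1 : mH 1 = 1)
    (hmHinv : ∀ (h₀ : H) (f f' : ↥H →ᵇ ℂ),
      (∀ h : H, f' h = f (h₀ * h)) → mH f' = mH f)
    (mN : ↥FN →L[ℂ] ℂ)
    (hmN1 : ∀ f : ↥FN, (∀ n : N, (↑f : ↥N →ᵇ ℂ) n = 1) → mN f = 1)
    (hmNinv : ∀ (n₀ : N) (f f' : ↥FN),
      (∀ n : N, (↑f' : ↥N →ᵇ ℂ) n = (↑f : ↥N →ᵇ ℂ) (n₀ * n)) → mN f' = mN f) :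
    ∃ mG : ↥FG →L[ℂ] ℂ,
      (∀ f : ↥FG, (∀ g : G, (↑f : G →ᵇ ℂ) g = 1) → mG f = 1) ∧
      (∀ (g₀ : G) (f f' : ↥FG),
        (∀ g : G, (↑f' : G →ᵇ ℂ) g = (↑f : G →ᵇ ℂ) (g₀ * g)) → mG f' = mG f) :=
  stmt3_general H N hNnormal hgen FN FG hFGinv hrestr mH hmH1 hmHinv mN hmN1 hmNinv
end

section
/- Let G be a group generated by a subgroup H and a normal subgroup N, where there exists a left H-invariant bounded functional m_H on ℓ^∞(H) with m_H(1) = 1. Let E be a Banach G-bimodule whose left action is unital, and D : G → E* a bounded derivation. Let F_{D,N} ⊆ ℓ^∞(N) be the span of the constant 1 and the functions n ↦ ⟨x, Dn·n⁻¹⟩ for x ∈ E. If there exists a left N-invariant bounded functional m_N on F_{D,N} with m_N(1) = 1, then D is an inner derivation of G. -/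
open BoundedContinuousFunction

/-- `F_{D,N} ⊆ ℓ^∞(N)`: span of the constant `1` and the functions
`n ↦ ⟨x, Dn·n⁻¹⟩` for `x ∈ E`, realised inside the bounded functions on `N`. -/
noncomputable def FDN {G E : Type*} [Group G] [TopologicalSpace G] [DiscreteTopology G]
    [NormedAddCommGroup E] [NormedSpace ℂ E] (N : Subgroup G)
    (M : GroupBimodule G E) (D : G → (E →L[ℂ] ℂ)) : Submodule ℂ (↥N →ᵇ ℂ) :=
  (Submodule.span ℂ
    (insert (fun _ => (1 : ℂ))
      {f : ↥N → ℂ | ∃ y : E, f = fun n : ↥N => D (n : G) (M.l ((n : G))⁻¹ y)})).comap (bcfCoeLM ↥N)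

/-- Averaging lemma: an invariant normalised mean on a submodule of `ℓ^∞(S)`
containing the constants and the coefficient functions of the derivation makes
the derivation inner on the subgroup `S`. -/
lemma avg_aux {G E : Type*} [Group G] [TopologicalSpace G] [DiscreteTopology G]
    [NormedAddCommGroup E] [NormedSpace ℂ E]
    (M : GroupBimodule G E) (hunital : M.l 1 = ContinuousLinearMap.id ℂ E)
    (D : G → (E →L[ℂ] ℂ))
    (hD : ∀ g h : G, ∀ x : E, D (g * h) x = D g (M.l h x) + D h (M.r g x))
    (hDbdd : ∃ C : ℝ, ∀ g : G, ‖D g‖ ≤ C)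
    (S : Subgroup G) (p : Submodule ℂ (↥S →ᵇ ℂ))
    (hone : (1 : ↥S →ᵇ ℂ) ∈ p)
    (hmem : ∀ x : E, ∃ f : ↥S →ᵇ ℂ, f ∈ p ∧ ∀ n : S, f n = D ↑n (M.l (↑n : G)⁻¹ x))
    (m : ↥p →L[ℂ] ℂ) (hm1 : m ⟨1, hone⟩ = 1)
    (hminv : ∀ (n₀ : S) (f f' : ↥p),
      (∀ n : S, (↑f' : ↥S →ᵇ ℂ) n = (↑f : ↥S →ᵇ ℂ) (n₀ * n)) → m f' = m f) :
    ∃ ξ : E →L[ℂ] ℂ, (∀ (n : S) (z : E), D ↑n z = ξ (M.l ↑n z) - ξ (M.r ↑n z)) ∧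
      (∀ x y : E, (∀ n : S, D ↑n (M.l (↑n : G)⁻¹ x) = D ↑n (M.l (↑n : G)⁻¹ y)) → ξ x = ξ y) := by
  classical
  obtain ⟨K, hK0, hK⟩ := M.bound
  obtain ⟨C₀, hC₀⟩ := hDbdd
  have hC : ∀ g : G, ‖D g‖ ≤ max C₀ 0 := fun g => le_trans (hC₀ g) (le_max_left _ _)
  set C : ℝ := max C₀ 0 with hCdef
  have hC0 : 0 ≤ C := le_max_right _ _
  choose F hFmem hF using hmem
  have Fp : E → ↥p := fun x => ⟨F x, hFmem x⟩
  set Fp : E → ↥p := fun x => ⟨F x, hFmem x⟩ with hFpdef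
  have hFext : ∀ (x : E) (q : ↥p),
      (∀ n : S, (↑q : ↥S →ᵇ ℂ) n = D ↑n (M.l (↑n : G)⁻¹ x)) → q = Fp x := by
    intro x q hq
    apply Subtype.ext
    apply BoundedContinuousFunction.ext
    intro n
    rw [hq n]
    exact (hF x n).symm
  set ξ₀ : E →ₗ[ℂ] ℂ :=
    { toFun := fun x => m (Fp x)
      map_add' := by
        intro x y
        show m (Fp (x + y)) = m (Fp x) + m (Fp y)
        have h : Fp (x + y) = Fp x + Fp y := by
          refine (hFext (x + y) (Fp x + Fp y) ?_).symm
          intro n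
          show F x n + F y n = D ↑n (M.l (↑n : G)⁻¹ (x + y))
          rw [hF x n, hF y n, map_add, map_add]
        rw [h, map_add]
      map_smul' := by
        intro c x
        show m (Fp (c • x)) = c • m (Fp x)
        have h : Fp (c • x) = c • Fp x := by
          refine (hFext (c • x) (c • Fp x) ?_).symm
          intro n
          show c • F x n = D ↑n (M.l (↑n : G)⁻¹ (c • x))
          rw [hF x n, map_smul, map_smul]
        rw [h, map_smul] } with hξ₀def
  have hFnorm : ∀ x : E, ‖Fp x‖ ≤ C * K * ‖x‖ := by
    intro x
    show ‖F x‖ ≤ C * K * ‖x‖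
    refine (BoundedContinuousFunction.norm_le (by positivity)).2 (fun n => ?_)
    rw [hF x n]
    calc ‖D ↑n (M.l (↑n : G)⁻¹ x)‖ ≤ ‖D ↑n‖ * ‖M.l (↑n : G)⁻¹ x‖ := (D ↑n).le_opNorm _
      _ ≤ C * (K * ‖x‖) := by
          refine mul_le_mul (hC _) ?_ (norm_nonneg _) hC0
          exact le_trans ((M.l _).le_opNorm x)
            (mul_le_mul_of_nonneg_right (hK _).1 (norm_nonneg x))
      _ = C * K * ‖x‖ := by ring
  have hξ₀bdd : ∀ x : E, ‖ξ₀ x‖ ≤ ‖m‖ * (C * K) * ‖x‖ := by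
    intro x
    calc ‖m (Fp x)‖ ≤ ‖m‖ * ‖Fp x‖ := m.le_opNorm _
      _ ≤ ‖m‖ * (C * K * ‖x‖) := mul_le_mul_of_nonneg_left (hFnorm x) (norm_nonneg m)
      _ = ‖m‖ * (C * K) * ‖x‖ := by ring
  set ξ : E →L[ℂ] ℂ := ξ₀.mkContinuous (‖m‖ * (C * K)) hξ₀bdd with hξdef
  have hξapp : ∀ x : E, ξ x = m (Fp x) := fun x => rfl
  have key : ∀ (n₀ : S) (x : E),
      ξ x = D ↑n₀ (M.l (↑n₀ : G)⁻¹ x) + ξ (M.r ↑n₀ (M.l (↑n₀ : G)⁻¹ x)) := by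
    intro n₀ x
    have hpt : ∀ n : S,
        (↑(D ↑n₀ (M.l (↑n₀ : G)⁻¹ x) • (⟨1, hone⟩ : ↥p)
          + Fp (M.r ↑n₀ (M.l (↑n₀ : G)⁻¹ x))) : ↥S →ᵇ ℂ) n
        = (↑(Fp x) : ↥S →ᵇ ℂ) (n₀ * n) := by
      intro n
      have h1 : (↑(D ↑n₀ (M.l (↑n₀ : G)⁻¹ x) • (⟨1, hone⟩ : ↥p)
          + Fp (M.r ↑n₀ (M.l (↑n₀ : G)⁻¹ x))) : ↥S →ᵇ ℂ) n
          = D ↑n₀ (M.l (↑n₀ : G)⁻¹ x)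
            + D ↑n (M.l (↑n : G)⁻¹ (M.r ↑n₀ (M.l (↑n₀ : G)⁻¹ x))) := by
        show D ↑n₀ (M.l (↑n₀ : G)⁻¹ x) • (1 : ℂ) + F (M.r ↑n₀ (M.l (↑n₀ : G)⁻¹ x)) n = _
        rw [hF]
        simp
      rw [h1, hF x (n₀ * n)]
      have hcoe : ((↑(n₀ * n) : G)) = (↑n₀ : G) * ↑n := rfl
      rw [hcoe, mul_inv_rev, hD (↑n₀ : G) (↑n : G)]
      congr 1
      · congr 1
        have h3 : M.l ((↑n : G) * ((↑n : G)⁻¹ * (↑n₀ : G)⁻¹)) x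
            = M.l (↑n : G) (M.l ((↑n : G)⁻¹ * (↑n₀ : G)⁻¹) x) := by rw [M.l_mul]; rfl
        rw [← h3, mul_inv_cancel_left]
      · congr 1
        have h4 : M.l ((↑n : G)⁻¹ * (↑n₀ : G)⁻¹) x
            = M.l (↑n : G)⁻¹ (M.l (↑n₀ : G)⁻¹ x) := by rw [M.l_mul]; rfl
        rw [h4, M.lr_comm]
    have hmeq := hminv n₀ (Fp x) _ hpt
    rw [map_add, map_smul, hm1, smul_eq_mul, mul_one] at hmeq
    rw [hξapp x, ← hmeq, hξapp]
  refine ⟨ξ, ?_, ?_⟩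
  · intro n z
    have h := key n (M.l (↑n : G) z)
    have hz : M.l (↑n : G)⁻¹ (M.l (↑n : G) z) = z := by
      have h5 : M.l ((↑n : G)⁻¹ * ↑n) z = M.l (↑n : G)⁻¹ (M.l (↑n : G) z) := by
        rw [M.l_mul]; rfl
      rw [← h5, inv_mul_cancel, hunital]; rfl
    rw [hz] at h
    linear_combination -h
  · intro x y h
    have hxy : Fp x = Fp y := by
      refine (hFext y (Fp x) ?_)
      intro n
      rw [show (↑(Fp x) : ↥S →ᵇ ℂ) n = F x n from rfl, hF x n, h n]
    rw [hξapp, hξapp, hxy]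

/-- if `G` is generated by a subgroup `H` (carrying a left invariant
normalised bounded functional on `ℓ^∞(H)`) and a normal subgroup `N`, the left `G`-action
on `E` is unital, `D` is a bounded derivation of `G` into `E*`, and there is a left
`N`-invariant normalised bounded functional on `F_{D,N}`, then `D` is inner. -/
theorem stmt4 {G E : Type*} [Group G] [TopologicalSpace G] [DiscreteTopology G]
    [NormedAddCommGroup E] [NormedSpace ℂ E] [CompleteSpace E]
    (H N : Subgroup G) (hNnormal : N.Normal) (hgen : H ⊔ N = ⊤)
    (mH : (↥H →ᵇ ℂ) →L[ℂ] ℂ)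
    (hmH1 : mH 1 = 1)
    (hmHinv : ∀ (h₀ : H) (f f' : ↥H →ᵇ ℂ),
      (∀ h : H, f' h = f (h₀ * h)) → mH f' = mH f)
    (M : GroupBimodule G E)
    (hunital : M.l 1 = ContinuousLinearMap.id ℂ E)
    (D : G → (E →L[ℂ] ℂ))
    (hD : ∀ g h : G, ∀ x : E, D (g * h) x = D g (M.l h x) + D h (M.r g x))
    (hDbdd : ∃ C : ℝ, ∀ g : G, ‖D g‖ ≤ C)
    (mN : ↥(FDN N M D) →L[ℂ] ℂ)
    (hmN1 : ∀ f : ↥(FDN N M D), (∀ n : N, (↑f : ↥N →ᵇ ℂ) n = 1) → mN f = 1)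
    (hmNinv : ∀ (n₀ : N) (f f' : ↥(FDN N M D)),
      (∀ n : N, (↑f' : ↥N →ᵇ ℂ) n = (↑f : ↥N →ᵇ ℂ) (n₀ * n)) → mN f' = mN f) :
    ∃ ξ : E →L[ℂ] ℂ, ∀ (g : G) (x : E), D g x = ξ (M.l g x) - ξ (M.r g x) := by
  classical
  obtain ⟨K, hK0, hK⟩ := M.bound
  obtain ⟨C₀, hC₀⟩ := hDbdd
  have hlmul : ∀ g h : G, ∀ x : E, M.l (g * h) x = M.l g (M.l h x) := by
    intro g h x; rw [M.l_mul]; rfl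
  have hrmul : ∀ g h : G, ∀ x : E, M.r (g * h) x = M.r h (M.r g x) := by
    intro g h x; rw [M.r_mul]; rfl
  -- Step 1: average over N using mN, producing ξ₁
  have honeN : (1 : ↥N →ᵇ ℂ) ∈ FDN N M D := by
    show bcfCoeLM ↥N (1 : ↥N →ᵇ ℂ) ∈ Submodule.span ℂ _
    have h1 : bcfCoeLM ↥N (1 : ↥N →ᵇ ℂ) = fun _ : ↥N => (1 : ℂ) := by
      funext n; rfl
    rw [h1]
    exact Submodule.subset_span (Set.mem_insert _ _)
  have hmemN : ∀ x : E, ∃ f : ↥N →ᵇ ℂ, f ∈ FDN N M D ∧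
      ∀ n : N, f n = D ↑n (M.l (↑n : G)⁻¹ x) := by
    intro x
    refine ⟨BoundedContinuousFunction.ofNormedAddCommGroup
      (fun n : ↥N => D ↑n (M.l (↑n : G)⁻¹ x)) continuous_of_discreteTopology
      (max C₀ 0 * (K * ‖x‖)) (fun n => ?_), ?_, fun n => rfl⟩
    · calc ‖D ↑n (M.l (↑n : G)⁻¹ x)‖ ≤ ‖D ↑n‖ * ‖M.l (↑n : G)⁻¹ x‖ := (D ↑n).le_opNorm _
        _ ≤ max C₀ 0 * (K * ‖x‖) := by
            refine mul_le_mul (le_trans (hC₀ _) (le_max_left _ _)) ?_ (norm_nonneg _)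
              (le_max_right _ _)
            exact le_trans ((M.l _).le_opNorm x)
              (mul_le_mul_of_nonneg_right (hK _).1 (norm_nonneg x))
    · show bcfCoeLM ↥N _ ∈ Submodule.span ℂ _
      exact Submodule.subset_span (Set.mem_insert_of_mem _ ⟨x, rfl⟩)
  have hm1N : mN ⟨1, honeN⟩ = 1 := hmN1 _ (fun n => rfl)
  obtain ⟨ξ₁, hξ₁, -⟩ :=
    avg_aux M hunital D hD ⟨C₀, hC₀⟩ N (FDN N M D) honeN hmemN mN hm1N hmNinv
  -- Step 2: the modified derivation D₁, vanishing on N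
  set D₁ : G → E →L[ℂ] ℂ :=
    fun g => D g - (ξ₁.comp (M.l g) - ξ₁.comp (M.r g)) with hD₁def
  have hD₁app : ∀ (g : G) (x : E),
      D₁ g x = D g x - (ξ₁ (M.l g x) - ξ₁ (M.r g x)) := fun g x => rfl
  have hD₁der : ∀ g h : G, ∀ x : E, D₁ (g * h) x = D₁ g (M.l h x) + D₁ h (M.r g x) := by
    intro g h x
    simp only [hD₁app]
    rw [hD g h x, hlmul g h x, hrmul g h x, M.lr_comm h g x]
    ring
  have hD₁bdd : ∃ C : ℝ, ∀ g : G, ‖D₁ g‖ ≤ C := by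
    refine ⟨C₀ + (‖ξ₁‖ * K + ‖ξ₁‖ * K), fun g => ?_⟩
    calc ‖D₁ g‖ ≤ ‖D g‖ + ‖ξ₁.comp (M.l g) - ξ₁.comp (M.r g)‖ := norm_sub_le _ _
      _ ≤ ‖D g‖ + (‖ξ₁.comp (M.l g)‖ + ‖ξ₁.comp (M.r g)‖) := by
          gcongr; exact norm_sub_le _ _
      _ ≤ C₀ + (‖ξ₁‖ * K + ‖ξ₁‖ * K) := by
          gcongr
          · exact hC₀ g
          · exact le_trans (ContinuousLinearMap.opNorm_comp_le _ _)
              (mul_le_mul_of_nonneg_left (hK g).1 (norm_nonneg ξ₁))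
          · exact le_trans (ContinuousLinearMap.opNorm_comp_le _ _)
              (mul_le_mul_of_nonneg_left (hK g).2 (norm_nonneg ξ₁))
  have hD₁N : ∀ g : G, g ∈ N → ∀ x : E, D₁ g x = 0 := by
    intro g hg x
    have h := hξ₁ ⟨g, hg⟩ x
    rw [hD₁app]
    rw [show ((⟨g, hg⟩ : N) : G) = g from rfl] at h
    rw [h]; ring
  -- Step 3: average over H using mH, producing ξ₂
  have honeH : (1 : ↥H →ᵇ ℂ) ∈ (⊤ : Submodule ℂ (↥H →ᵇ ℂ)) := trivial
  obtain ⟨C₁, hC₁⟩ := hD₁bdd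
  have hmemH : ∀ x : E, ∃ f : ↥H →ᵇ ℂ, f ∈ (⊤ : Submodule ℂ (↥H →ᵇ ℂ)) ∧
      ∀ h : H, f h = D₁ ↑h (M.l (↑h : G)⁻¹ x) := by
    intro x
    refine ⟨BoundedContinuousFunction.ofNormedAddCommGroup
      (fun h : ↥H => D₁ ↑h (M.l (↑h : G)⁻¹ x)) continuous_of_discreteTopology
      (max C₁ 0 * (K * ‖x‖)) (fun h => ?_), trivial, fun h => rfl⟩
    calc ‖D₁ ↑h (M.l (↑h : G)⁻¹ x)‖ ≤ ‖D₁ ↑h‖ * ‖M.l (↑h : G)⁻¹ x‖ := (D₁ ↑h).le_opNorm _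
      _ ≤ max C₁ 0 * (K * ‖x‖) := by
          refine mul_le_mul (le_trans (hC₁ _) (le_max_left _ _)) ?_ (norm_nonneg _)
            (le_max_right _ _)
          exact le_trans ((M.l _).le_opNorm x)
            (mul_le_mul_of_nonneg_right (hK _).1 (norm_nonneg x))
  set mH' : ↥(⊤ : Submodule ℂ (↥H →ᵇ ℂ)) →L[ℂ] ℂ :=
    mH.comp (Submodule.subtypeL ⊤) with hmH'def
  have hm1H : mH' ⟨1, honeH⟩ = 1 := hmH1
  have hminvH : ∀ (h₀ : H) (f f' : ↥(⊤ : Submodule ℂ (↥H →ᵇ ℂ))),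
      (∀ h : H, (↑f' : ↥H →ᵇ ℂ) h = (↑f : ↥H →ᵇ ℂ) (h₀ * h)) → mH' f' = mH' f :=
    fun h₀ f f' hp => hmHinv h₀ ↑f ↑f' hp
  obtain ⟨ξ₂, hξ₂H, hξ₂ext⟩ :=
    avg_aux M hunital D₁ hD₁der ⟨C₁, hC₁⟩ H ⊤ honeH hmemH mH' hm1H hminvH
  -- ξ₂ is N-balanced (uses normality of N)
  have hξ₂N : ∀ g : G, g ∈ N → ∀ x : E, ξ₂ (M.l g x) = ξ₂ (M.r g x) := by
    intro ng hn x
    refine hξ₂ext _ _ (fun h => ?_)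
    have hn' : (↑h : G)⁻¹ * ng * ↑h ∈ N := by
      have := hNnormal.conj_mem ng hn (↑h : G)⁻¹
      simpa using this
    have f1 : D₁ ((↑h : G) * ((↑h : G)⁻¹ * ng * ↑h)) (M.l (↑h : G)⁻¹ x)
        = D₁ (↑h : G) (M.l ((↑h : G)⁻¹ * ng * ↑h) (M.l (↑h : G)⁻¹ x)) := by
      rw [hD₁der, hD₁N _ hn']; ring
    have f2 : D₁ (ng * (↑h : G)) (M.l (↑h : G)⁻¹ x)
        = D₁ (↑h : G) (M.r ng (M.l (↑h : G)⁻¹ x)) := by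
      rw [hD₁der, hD₁N ng hn]; ring
    have hgr : (↑h : G) * ((↑h : G)⁻¹ * ng * ↑h) = ng * ↑h := by group
    have e1 : M.l (↑h : G)⁻¹ (M.l ng x)
        = M.l ((↑h : G)⁻¹ * ng * ↑h) (M.l (↑h : G)⁻¹ x) := by
      rw [← hlmul, ← hlmul]
      congr 1
      group
    have e2 : M.l (↑h : G)⁻¹ (M.r ng x) = M.r ng (M.l (↑h : G)⁻¹ x) :=
      M.lr_comm (↑h : G)⁻¹ ng x
    rw [e1, e2, ← f1, hgr, f2]
  -- induction over the generating set H ∪ N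
  have hPH : ∀ g : G, g ∈ H → ∀ x : E, D₁ g x = ξ₂ (M.l g x) - ξ₂ (M.r g x) :=
    fun g hg x => hξ₂H ⟨g, hg⟩ x
  have hPN : ∀ g : G, g ∈ N → ∀ x : E, D₁ g x = ξ₂ (M.l g x) - ξ₂ (M.r g x) := by
    intro g hg x
    rw [hD₁N g hg x, hξ₂N g hg x]; ring
  have hPall : ∀ g : G, ∀ x : E, D₁ g x = ξ₂ (M.l g x) - ξ₂ (M.r g x) := by
    intro g
    have hg : g ∈ Subgroup.closure ((H : Set G) ∪ (N : Set G)) := by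
      rw [Subgroup.closure_union, Subgroup.closure_eq, Subgroup.closure_eq, hgen]
      trivial
    refine Subgroup.closure_induction
      (p := fun g _ => ∀ x : E, D₁ g x = ξ₂ (M.l g x) - ξ₂ (M.r g x))
      ?_ ?_ ?_ ?_ hg
    · rintro g (hgH | hgN)
      exacts [hPH g hgH, hPN g hgN]
    · exact hPH 1 H.one_mem
    · intro a b _ _ ha hb x
      rw [hD₁der a b x, ha, hb, hlmul a b x, hrmul a b x, M.lr_comm b a x]
      ring
    · intro a _ ha x
      have hP1' := hPH 1 H.one_mem (M.l a⁻¹ x)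
      have hder := hD₁der a⁻¹ a (M.l a⁻¹ x)
      rw [inv_mul_cancel] at hder
      have e1 : M.l a (M.l a⁻¹ x) = x := by
        rw [← hlmul, mul_inv_cancel, hunital]; rfl
      rw [e1] at hder
      have ha' := ha (M.r a⁻¹ (M.l a⁻¹ x))
      have e2 : M.l a (M.r a⁻¹ (M.l a⁻¹ x)) = M.r a⁻¹ x := by
        rw [M.lr_comm, e1]
      have e3 : M.r a (M.r a⁻¹ (M.l a⁻¹ x)) = M.r 1 (M.l a⁻¹ x) := by
        rw [← hrmul, inv_mul_cancel]
      rw [e2, e3] at ha'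
      have e4 : M.l 1 (M.l a⁻¹ x) = M.l a⁻¹ x := by rw [hunital]; rfl
      rw [e4] at hP1'
      linear_combination hP1' - hder - ha'
  -- conclusion
  refine ⟨ξ₁ + ξ₂, fun g x => ?_⟩
  have h := hPall g x
  rw [hD₁app] at h
  simp only [ContinuousLinearMap.add_apply]
  linear_combination h
end
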